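/- Let (V,F) be a filtered vector space over a field k, and equip every subspace of V with the induced filtration; write deg(U) for the degree of a subspace U. Let U_0 ⊆ V be a nonzero subspace with deg(U_0) > 0 such that every nonzero proper subspace W ⊊ U_0 satisfies deg(W) ≤ 0. Then for every subspace U ⊆ V one has deg(U + U_0) ≥ deg(U). In particular, if deg(U) > 0 then deg(U + U_0) > 0. -/
import Mathlib


open Submodule Module

/-- An ℝ-filtration on a `k`-vector space `V`: an antitone family of subspaces which is
exhaustive, separated, and left-continuous. -/
structure RFiltration (k V : Type*) [Field k] [AddCommGroup V] [Module k V] where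
  filt : ℝ → Submodule k V
  antitone' : Antitone filt
  eventually_top : ∃ a : ℝ, ∀ x : ℝ, x ≤ a → filt x = ⊤
  eventually_bot : ∃ b : ℝ, ∀ x : ℝ, b ≤ x → filt x = ⊥
  left_cont : ∀ x : ℝ, filt x = ⨅ y : {y : ℝ // y < x}, filt y.1

namespace RFiltration

variable {k V W : Type*} [Field k] [AddCommGroup V] [Module k V]
  [AddCommGroup W] [Module k W]

/-- `F^{x+} = ⋃_{y > x} F^y`. -/
noncomputable def plus (F : RFiltration k V) (x : ℝ) : Submodule k V :=
  ⨆ y : {y : ℝ // x < y}, F.filt y.1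

/-- `dim gr^x(V) = dim (F^x / F^{x+})`. -/
noncomputable def grDim (F : RFiltration k V) (x : ℝ) : ℕ :=
  Module.finrank k (↥(F.filt x) ⧸ (F.plus x).comap (F.filt x).subtype)

/-- The degree `deg(V,F) = ∑_x x · dim gr^x(V)`. -/
noncomputable def deg (F : RFiltration k V) : ℝ :=
  ∑ᶠ x : ℝ, x * (F.grDim x : ℝ)

/-- The induced filtration `U ∩ F^x` on a subspace `U ⊆ V`. -/
noncomputable def induced (F : RFiltration k V) (U : Submodule k V) : RFiltration k U where
  filt x := (F.filt x).comap U.subtype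
  antitone' := fun _ _ h => Submodule.comap_mono (F.antitone' h)
  eventually_top := by
    obtain ⟨a, ha⟩ := F.eventually_top
    exact ⟨a, fun x hx => by simp [ha x hx]⟩
  eventually_bot := by
    obtain ⟨b, hb⟩ := F.eventually_bot
    exact ⟨b, fun x hx => by simp [hb x hx, Submodule.comap_bot, Submodule.ker_subtype]⟩
  left_cont := by
    intro x
    show (F.filt x).comap U.subtype = _
    rw [F.left_cont x]
    ext m
    simp [Submodule.mem_iInf]

end RFiltration

namespace RFiltration

variable {k V : Type*} [Field k] [AddCommGroup V] [Module k V]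

lemma filt_le_plus (F : RFiltration k V) {x y : ℝ} (h : x < y) : F.filt y ≤ F.plus x :=
  le_iSup (fun y : {y : ℝ // x < y} => F.filt y.1) ⟨y, h⟩

lemma plus_le (F : RFiltration k V) (x : ℝ) : F.plus x ≤ F.filt x :=
  iSup_le fun y => F.antitone' (le_of_lt y.2)

section FinDim

variable [FiniteDimensional k V] (F : RFiltration k V)

/-- The filtration is attained just above any point: there is `z > x` with
`F.filt y = F.plus x` for all `y ∈ (x, z]`. -/
lemma exists_forall_plus (x : ℝ) :
    ∃ z, x < z ∧ ∀ y, x < y → y ≤ z → F.filt y = F.plus x := by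
  have hW : ∀ s : Set (Submodule k V), s.Nonempty → ∃ M ∈ s, ∀ N ∈ s, ¬ M < N :=
    fun s hs => (wellFounded_lt (α := (Submodule k V)ᵒᵈ)).has_min s hs
  obtain ⟨M, ⟨⟨z, hz⟩, rfl⟩, hmax⟩ :=
    hW (Set.range (fun y : {y : ℝ // x < y} => F.filt y.1)) ⟨F.filt (x + 1), ⟨⟨x + 1, lt_add_one x⟩, rfl⟩⟩
  have hplus : F.plus x = F.filt z := by
    apply le_antisymm
    · apply iSup_le
      rintro ⟨y, hy⟩
      rcases le_total z y with h | h
      · exact F.antitone' h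
      · have h1 : F.filt z ≤ F.filt y := F.antitone' h
        have h2 : ¬ F.filt z < F.filt y := hmax _ ⟨⟨y, hy⟩, rfl⟩
        exact le_of_eq (by rcases lt_or_eq_of_le h1 with h' | h'; exact absurd h' h2; exact h'.symm)
    · exact F.filt_le_plus hz
  refine ⟨z, hz, fun y hxy hyz => le_antisymm (F.filt_le_plus hxy) ?_⟩
  rw [hplus]
  exact F.antitone' hyz

/-- Constancy on jump-free intervals. -/
lemma filt_eq_plus_of_no_jump {u v : ℝ} (huv : u < v)
    (h : ∀ y, u < y → y < v → F.filt y = F.plus y) : F.filt v = F.plus u := by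
  set T := {y : ℝ | u < y ∧ y ≤ v ∧ F.filt y = F.plus u} with hT
  obtain ⟨z, hz, hzall⟩ := F.exists_forall_plus u
  have hmem : min z v ∈ T :=
    ⟨lt_min hz huv, min_le_right _ _, hzall _ (lt_min hz huv) (min_le_left _ _)⟩
  have hne : T.Nonempty := ⟨_, hmem⟩
  have hbdd : BddAbove T := ⟨v, fun y hy => hy.2.1⟩
  set t := sSup T with ht
  have hut : u < t := lt_of_lt_of_le hmem.1 (le_csSup hbdd hmem)
  have htv : t ≤ v := csSup_le hne (fun y hy => hy.2.1)
  have hft : F.filt t = F.plus u := by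
    rw [F.left_cont t]
    apply le_antisymm
    · calc ⨅ y : {y : ℝ // y < t}, F.filt y.1 ≤ F.filt ((u + t) / 2) :=
            iInf_le (fun y : {y : ℝ // y < t} => F.filt y.1) ⟨(u + t) / 2, by linarith⟩
        _ ≤ F.plus u := F.filt_le_plus (by linarith)
    · apply le_iInf
      rintro ⟨y, hy⟩
      rcases le_or_gt y u with h' | h'
      · exact le_trans (F.plus_le u) (F.antitone' h')
      · obtain ⟨w, hw, hyw⟩ := exists_lt_of_lt_csSup hne hy
        calc F.plus u = F.filt w := hw.2.2.symm
          _ ≤ F.filt y := F.antitone' (le_of_lt hyw)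
  rcases eq_or_lt_of_le htv with h' | h'
  · rw [← h']; exact hft
  · exfalso
    have hjt : F.filt t = F.plus t := h t hut h'
    obtain ⟨z', hz', hz'all⟩ := F.exists_forall_plus t
    have hmem' : min z' v ∈ T := by
      refine ⟨lt_trans hut (lt_min hz' h'), min_le_right _ _, ?_⟩
      rw [hz'all _ (lt_min hz' h') (min_le_left _ _), ← hjt, hft]
    have := le_csSup hbdd hmem'
    have : t < min z' v := lt_min hz' h'
    linarith [le_csSup hbdd hmem']

/-- The set of jump points of `F`. -/
def jumps : Set ℝ := {x : ℝ | F.filt x ≠ F.plus x}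

lemma jumps_finite : F.jumps.Finite := by
  have key : ∀ x ∈ F.jumps, ∀ y ∈ F.jumps, x < y →
      finrank k (F.filt y) < finrank k (F.filt x) := by
    intro x hx y hy hxy
    have h1 : finrank k (F.filt y) ≤ finrank k (F.plus x) :=
      Submodule.finrank_mono (F.filt_le_plus hxy)
    have h2 : finrank k (F.plus x) < finrank k (F.filt x) :=
      Submodule.finrank_lt_finrank_of_lt (lt_of_le_of_ne (F.plus_le x) (Ne.symm hx))
    omega
  apply Set.Finite.of_finite_image (f := fun x => finrank k (F.filt x))
  · exact (Set.finite_Iic (finrank k V)).subset (by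
      rintro m ⟨x, _, rfl⟩
      exact Submodule.finrank_le _)
  · intro x hx y hy hxy
    by_contra hne
    rcases lt_or_gt_of_ne hne with h | h
    · exact absurd hxy (ne_of_gt (key x hx y hy h))
    · exact absurd hxy (ne_of_lt (key y hy x hx h))

lemma induced_filt (U : Submodule k V) (x : ℝ) :
    (F.induced U).filt x = (F.filt x).comap U.subtype := rfl

lemma induced_plus (U : Submodule k V) (x : ℝ) :
    (F.induced U).plus x = (F.plus x).comap U.subtype := by
  have hdir : Directed (· ≤ ·) (fun y : {y : ℝ // x < y} => F.filt y.1) := by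
    rintro ⟨a, ha⟩ ⟨b, hb⟩
    exact ⟨⟨min a b, lt_min ha hb⟩, F.antitone' (min_le_left a b),
      F.antitone' (min_le_right a b)⟩
  have hdir' : Directed (· ≤ ·) (fun y : {y : ℝ // x < y} => (F.filt y.1).comap U.subtype) :=
    fun a b => by
      obtain ⟨c, h1, h2⟩ := hdir a b
      exact ⟨c, Submodule.comap_mono h1, Submodule.comap_mono h2⟩
  have hne : Nonempty {y : ℝ // x < y} := ⟨⟨x + 1, lt_add_one x⟩⟩
  ext m
  rw [Submodule.mem_comap]
  show m ∈ ⨆ y : {y : ℝ // x < y}, (F.filt y.1).comap U.subtype ↔ _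
  rw [Submodule.mem_iSup_of_directed _ hdir']
  show _ ↔ (m : V) ∈ ⨆ y : {y : ℝ // x < y}, F.filt y.1
  rw [Submodule.mem_iSup_of_directed _ hdir]
  simp [Submodule.mem_comap]

lemma finrank_comap_subtype (U p : Submodule k V) :
    finrank k (p.comap U.subtype) = finrank k ↥(U ⊓ p) := by
  rw [← Submodule.map_comap_subtype]
  exact (Submodule.equivMapOfInjective U.subtype U.injective_subtype
    (p.comap U.subtype)).finrank_eq

end FinDim

lemma grDim_add_finrank [FiniteDimensional k V] (F : RFiltration k V) (x : ℝ) :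
    F.grDim x + finrank k (F.plus x) = finrank k (F.filt x) := by
  have h := Submodule.finrank_quotient_add_finrank ((F.plus x).comap (F.filt x).subtype)
  rwa [(Submodule.comapSubtypeEquivOfLe (F.plus_le x)).finrank_eq] at h

section FinDim2

variable [FiniteDimensional k V] (F : RFiltration k V)

lemma grDim_induced_eq_zero {U : Submodule k V} {x : ℝ} (h : F.filt x = F.plus x) :
    (F.induced U).grDim x = 0 := by
  have key := (F.induced U).grDim_add_finrank x
  rw [F.induced_plus U x, ← h] at key
  have : finrank k ((F.induced U).filt x) = finrank k ((F.filt x).comap U.subtype) := rfl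
  omega

/-- Abel summation auxiliary identity. -/
lemma abel_aux (f g : ℕ → ℝ) (n : ℕ) :
    ∑ i ∈ Finset.range n, g i * (f i - f (i + 1)) =
      g 0 * f 0 - g n * f n + ∑ i ∈ Finset.range n, (g (i + 1) - g i) * f (i + 1) := by
  induction n with
  | zero => simp
  | succ n ih => rw [Finset.sum_range_succ, Finset.sum_range_succ, ih]; ring

/-- The key formula for the degree of the induced filtration on `U`. -/
lemma deg_induced_eq (U : Submodule k V) (n : ℕ) (c : ℕ → ℝ)
    (hc : ∀ i j : ℕ, i < j → j ≤ n → c i < c j)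
    (htop : F.filt (c 0) = ⊤) (hbot : F.filt (c n) = ⊥)
    (hj : F.jumps ⊆ c '' Set.Iic n) :
    (F.induced U).deg = c 0 * (finrank k U : ℝ) +
      ∑ i ∈ Finset.range n, (c (i + 1) - c i) * (finrank k ↥(U ⊓ F.filt (c (i + 1))) : ℝ) := by
  set d : ℕ → ℝ := fun i => (finrank k ↥(U ⊓ F.filt (c i)) : ℝ) with hd
  have hd0 : d 0 = (finrank k U : ℝ) := by
    have h0 : U ⊓ F.filt (c 0) = U := by rw [htop]; exact inf_top_eq U
    simp only [hd]
    rw [h0]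
  have hdn : d n = 0 := by
    have h0 : U ⊓ F.filt (c n) = ⊥ := by rw [hbot]; exact inf_bot_eq U
    simp only [hd]
    rw [h0, finrank_bot]
    norm_num
  -- membership of jumps in the image
  have hsupp : Function.support (fun x : ℝ => x * ((F.induced U).grDim x : ℝ))
      ⊆ ((Finset.range (n + 1)).image c : Finset ℝ) := by
    intro x hx
    have hgr : (F.induced U).grDim x ≠ 0 := by
      intro h0
      apply hx
      simp [h0]
    have hxj : x ∈ F.jumps := by
      by_contra hxj
      exact hgr (F.grDim_induced_eq_zero (not_not.mp (by simpa [jumps] using hxj)))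
    obtain ⟨i, hi, rfl⟩ := hj hxj
    simp only [Finset.coe_image, Set.mem_image, Finset.mem_coe, Finset.mem_range]
    exact ⟨i, Nat.lt_succ_of_le hi, rfl⟩
  have hinj : ∀ i ∈ Finset.range (n + 1), ∀ j ∈ Finset.range (n + 1), c i = c j → i = j := by
    intro i hi j hj' hcij
    simp only [Finset.mem_range] at hi hj'
    by_contra hne
    rcases lt_or_gt_of_ne hne with h | h
    · exact absurd hcij (ne_of_lt (hc i j h (by omega)))
    · exact absurd hcij.symm (ne_of_lt (hc j i h (by omega)))
  have hdeg : (F.induced U).deg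
      = ∑ i ∈ Finset.range (n + 1), c i * (((F.induced U).grDim (c i) : ℝ)) := by
    rw [deg, finsum_eq_sum_of_support_subset _ hsupp, Finset.sum_image hinj]
  -- grDim values
  have hgrn : (F.induced U).grDim (c n) = 0 := by
    have key := (F.induced U).grDim_add_finrank (c n)
    have hfn : finrank k ((F.induced U).filt (c n)) = 0 := by
      rw [F.induced_filt U (c n), finrank_comap_subtype U]
      have h0 : U ⊓ F.filt (c n) = ⊥ := by rw [hbot]; exact inf_bot_eq U
      rw [h0, finrank_bot]
    omega
  have hgr : ∀ i < n, (((F.induced U).grDim (c i) : ℝ)) = d i - d (i + 1) := by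
    intro i hi
    have hplus : F.plus (c i) = F.filt (c (i + 1)) := by
      symm
      apply F.filt_eq_plus_of_no_jump (hc i (i + 1) (by omega) (by omega))
      intro y hy1 hy2
      by_contra hne
      obtain ⟨j, hjn, hjy⟩ := hj (by simpa [jumps] using hne)
      rcases lt_or_ge j (i + 1) with h | h
      · have : c j ≤ c i := by
          rcases Nat.lt_or_ge j i with h' | h'
          · exact le_of_lt (hc j i h' (by omega))
          · have : j = i := by omega
            rw [this]
        rw [hjy] at this; linarith
      · have : c (i + 1) ≤ c j := by
          rcases Nat.lt_or_ge (i + 1) j with h' | h'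
          · exact le_of_lt (hc (i + 1) j h' hjn)
          · have : j = i + 1 := by omega
            rw [this]
        rw [hjy] at this; linarith
    have key := (F.induced U).grDim_add_finrank (c i)
    rw [F.induced_plus U (c i), hplus] at key
    have h1 : finrank k ((F.filt (c (i + 1))).comap U.subtype)
        = finrank k ↥(U ⊓ F.filt (c (i + 1))) := finrank_comap_subtype U _
    have h2 : finrank k ((F.induced U).filt (c i)) = finrank k ↥(U ⊓ F.filt (c i)) := by
      rw [F.induced_filt U (c i), finrank_comap_subtype U]
    rw [h1, h2] at key
    have key' := congrArg (Nat.cast : ℕ → ℝ) key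
    push_cast at key'
    simp only [hd]
    linarith
  rw [hdeg, Finset.sum_range_succ, hgrn]
  rw [Finset.sum_congr rfl (fun i hi => by
    rw [hgr i (Finset.mem_range.mp hi)])]
  rw [abel_aux d c n, hd0, hdn]
  ring

lemma finrank_inf_submodular (U U₀ p : Submodule k V) :
    finrank k ↥(U ⊓ p) + finrank k ↥(U₀ ⊓ p)
      ≤ finrank k ↥((U ⊔ U₀) ⊓ p) + finrank k ↥((U ⊓ U₀) ⊓ p) := by
  have h1 : (U ⊓ p) ⊔ (U₀ ⊓ p) ≤ (U ⊔ U₀) ⊓ p :=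
    sup_le (inf_le_inf_right p le_sup_left) (inf_le_inf_right p le_sup_right)
  have h2 : (U ⊓ p) ⊓ (U₀ ⊓ p) = (U ⊓ U₀) ⊓ p := by
    rw [inf_inf_inf_comm, inf_idem]
  calc finrank k ↥(U ⊓ p) + finrank k ↥(U₀ ⊓ p)
      = finrank k ↥((U ⊓ p) ⊔ (U₀ ⊓ p)) + finrank k ↥((U ⊓ p) ⊓ (U₀ ⊓ p)) :=
        (Submodule.finrank_sup_add_finrank_inf_eq _ _).symm
    _ ≤ finrank k ↥((U ⊔ U₀) ⊓ p) + finrank k ↥((U ⊓ U₀) ⊓ p) :=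
        add_le_add (Submodule.finrank_mono h1) (le_of_eq (by rw [h2]))

lemma deg_submodular (U U₀ : Submodule k V) :
    (F.induced U).deg + (F.induced U₀).deg
      ≤ (F.induced (U ⊔ U₀)).deg + (F.induced (U ⊓ U₀)).deg := by
  obtain ⟨a, ha⟩ := F.eventually_top
  obtain ⟨b, hb⟩ := F.eventually_bot
  classical
  set S : Finset ℝ := insert a (insert b (F.jumps_finite).toFinset) with hS
  have hSne : a ∈ S := Finset.mem_insert_self a _
  have hcard : S.card = (S.card - 1) + 1 :=
    (Nat.succ_pred_eq_of_pos (Finset.card_pos.mpr ⟨a, hSne⟩)).symm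
  set n : ℕ := S.card - 1 with hn
  set e := S.orderIsoOfFin hcard
  set c : ℕ → ℝ := fun i => (e ⟨min i n, by omega⟩ : ℝ) with hc
  have hmono : ∀ i j : ℕ, i < j → j ≤ n → c i < c j := by
    intro i j hij hjn
    have : (⟨min i n, by omega⟩ : Fin (n + 1)) < ⟨min j n, by omega⟩ := by
      rw [Fin.lt_def]
      have hi' : min i n = i := min_eq_left (by omega)
      have hj' : min j n = j := min_eq_left hjn
      simpa [hi', hj'] using hij
    exact_mod_cast e.strictMono this
  -- c 0 is the min of S, c n is the max of S
  have hc0le : ∀ x ∈ S, c 0 ≤ x := by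
    intro x hx
    obtain ⟨i, hi⟩ := e.surjective ⟨x, hx⟩
    have : e ⟨min 0 n, by omega⟩ ≤ e i := e.monotone (by simp [Fin.le_def])
    calc c 0 = (e ⟨min 0 n, by omega⟩ : ℝ) := rfl
      _ ≤ (e i : ℝ) := this
      _ = x := by rw [hi]
  have hcnge : ∀ x ∈ S, x ≤ c n := by
    intro x hx
    obtain ⟨i, hi⟩ := e.surjective ⟨x, hx⟩
    have : e i ≤ e ⟨min n n, by omega⟩ := e.monotone (by simp [Fin.le_def]; omega)
    calc x = (e i : ℝ) := by rw [hi]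
      _ ≤ (e ⟨min n n, by omega⟩ : ℝ) := this
      _ = c n := rfl
  have htop : F.filt (c 0) = ⊤ := ha _ (hc0le a hSne)
  have hbot : F.filt (c n) = ⊥ :=
    hb _ (hcnge b (Finset.mem_insert_of_mem (Finset.mem_insert_self b _)))
  have hj : F.jumps ⊆ c '' Set.Iic n := by
    intro x hx
    have hxS : x ∈ S := Finset.mem_insert_of_mem (Finset.mem_insert_of_mem
      ((F.jumps_finite).mem_toFinset.mpr hx))
    obtain ⟨i, hi⟩ := e.surjective ⟨x, hxS⟩
    have hin : i.1 ≤ n := Nat.lt_succ_iff.mp i.2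
    refine ⟨i.1, hin, ?_⟩
    have : (⟨min i.1 n, by omega⟩ : Fin (n + 1)) = i := by
      apply Fin.ext
      simpa using min_eq_left hin
    rw [hc]
    simp only [this, hi]
  have e1 := F.deg_induced_eq U n c hmono htop hbot hj
  have e2 := F.deg_induced_eq U₀ n c hmono htop hbot hj
  have e3 := F.deg_induced_eq (U ⊔ U₀) n c hmono htop hbot hj
  have e4 := F.deg_induced_eq (U ⊓ U₀) n c hmono htop hbot hj
  rw [e1, e2, e3, e4]
  have hdim : (finrank k ↥(U ⊔ U₀) : ℝ) + (finrank k ↥(U ⊓ U₀) : ℝ)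
      = (finrank k U : ℝ) + (finrank k U₀ : ℝ) := by
    exact_mod_cast congrArg (fun m : ℕ => (m : ℝ))
      (Submodule.finrank_sup_add_finrank_inf_eq U U₀)
  have hsum : ∑ i ∈ Finset.range n, (c (i + 1) - c i) * (finrank k ↥(U ⊓ F.filt (c (i + 1))) : ℝ)
      + ∑ i ∈ Finset.range n, (c (i + 1) - c i) * (finrank k ↥(U₀ ⊓ F.filt (c (i + 1))) : ℝ)
      ≤ ∑ i ∈ Finset.range n, (c (i + 1) - c i) * (finrank k ↥((U ⊔ U₀) ⊓ F.filt (c (i + 1))) : ℝ)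
      + ∑ i ∈ Finset.range n, (c (i + 1) - c i) * (finrank k ↥((U ⊓ U₀) ⊓ F.filt (c (i + 1))) : ℝ) := by
    rw [← Finset.sum_add_distrib, ← Finset.sum_add_distrib]
    apply Finset.sum_le_sum
    intro i hi
    rw [← mul_add, ← mul_add]
    apply mul_le_mul_of_nonneg_left
    · exact_mod_cast finrank_inf_submodular U U₀ (F.filt (c (i + 1)))
    · have := hmono i (i + 1) (by omega) (by
        simp only [Finset.mem_range] at hi; omega)
      linarith
  have hdim2 : c 0 * (finrank k ↥(U ⊔ U₀) : ℝ) + c 0 * (finrank k ↥(U ⊓ U₀) : ℝ)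
      = c 0 * (finrank k U : ℝ) + c 0 * (finrank k U₀ : ℝ) := by
    rw [← mul_add, ← mul_add, hdim]
  linarith [hsum, hdim2]

lemma deg_induced_bot : (F.induced (⊥ : Submodule k V)).deg = 0 := by
  have h : ∀ x : ℝ, (F.induced (⊥ : Submodule k V)).grDim x = 0 := by
    intro x
    have key := (F.induced (⊥ : Submodule k V)).grDim_add_finrank x
    have h1 := Submodule.finrank_le ((F.induced (⊥ : Submodule k V)).filt x)
    have h2 : finrank k (↥(⊥ : Submodule k V)) = 0 := finrank_bot k V
    rw [h2] at h1
    omega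
  rw [deg]
  have : (fun x : ℝ => x * (((F.induced (⊥ : Submodule k V)).grDim x : ℝ))) = fun _ => 0 := by
    funext x; rw [h x]; ring
  rw [this, finsum_zero]

end FinDim2

end RFiltration

/-- **Statement 17.** If `U₀` is a nonzero subspace of positive degree all of whose nonzero
proper subspaces have degree `≤ 0`, then adding `U₀` to any subspace does not decrease the
degree; in particular it preserves positivity of the degree. (All subspaces carry the
induced filtration.) -/
theorem deg_sup_minimal_positive
    {k V : Type*} [Field k] [AddCommGroup V] [Module k V] [FiniteDimensional k V]
    (F : RFiltration k V) (U₀ : Submodule k V) (hU₀ : U₀ ≠ ⊥)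
    (hpos : 0 < (F.induced U₀).deg)
    (hmin : ∀ W : Submodule k V, W ≠ ⊥ → W < U₀ → (F.induced W).deg ≤ 0) :
    ∀ U : Submodule k V,
      (F.induced U).deg ≤ (F.induced (U ⊔ U₀)).deg ∧
      (0 < (F.induced U).deg → 0 < (F.induced (U ⊔ U₀)).deg) := by
  intro U
  by_cases hle : U₀ ≤ U
  · rw [sup_eq_left.mpr hle]
    exact ⟨le_refl _, fun h => h⟩
  · have hW : U ⊓ U₀ < U₀ :=
      lt_of_le_of_ne inf_le_right (fun h => hle (h ▸ inf_le_left))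
    have hWdeg : (F.induced (U ⊓ U₀)).deg ≤ 0 := by
      by_cases hWbot : U ⊓ U₀ = ⊥
      · rw [hWbot, F.deg_induced_bot]
      · exact hmin _ hWbot hW
    have hsub := F.deg_submodular U U₀
    have hlt : (F.induced U).deg < (F.induced (U ⊔ U₀)).deg := by
      clear hle hmin hU₀ hW
      linarith
    exact ⟨hlt.le, fun h => lt_trans h hlt⟩
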